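/- arXiv:1003.0500 — 5 statements merged into one kernel-verified Lean document; each statement's English description precedes it below -/
import Mathlib

section
/- If A ∈ sp(4,ℂ) satisfies A² = 0 and the kernel of A has dimension 3 (equivalently A ≠ 0 has rank 1), then there exists B ∈ Sp(4,ℂ) such that B⁻¹AB = E₁₃, where E₁₃ is the 4×4 matrix whose (1,3) entry is 1 and all other entries are 0. -/
/-!
For `A ∈ sp(4,ℂ)` the matrix `Jᵀ A` is symmetric, and `dim ker A = 3` makes it of rank one; a
symmetric rank-one complex matrix is `u uᵀ`, so `A = J u uᵀ` with `u ≠ 0`. Conjugation by a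
symplectic `P` sends `J u uᵀ` to `J v vᵀ` with `v = Pᵀ u`, and the symplectic group acts
transitively on nonzero vectors, so one can reach `v = e₃`, where `J e₃ e₃ᵀ = E₁₃`.
-/

open Matrix

/-- The 4×4 standard symplectic matrix `J = [[0, I], [-I, 0]]`. -/
noncomputable def J4 : Matrix (Fin 4) (Fin 4) ℂ :=
  !![0, 0, 1, 0;
     0, 0, 0, 1;
     -1, 0, 0, 0;
     0, -1, 0, 0]

theorem Matrix.exists_eq_vecMulVec_of_rank_le_one {K m n : Type*} [Field K] [Fintype n]
    [DecidableEq n] (M : Matrix m n K) (h : M.rank ≤ 1) : ∃ a b, M = vecMulVec a b := by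
  obtain ⟨v, hv⟩ := finrank_le_one_iff.mp h
  choose c hc using fun j ↦ hv ⟨M *ᵥ Pi.single j 1, Pi.single j 1, rfl⟩
  refine ⟨v, c, ext fun i j ↦ ?_⟩
  have := congrFun (congrArg Subtype.val (hc j)) i
  simpa [mulVec_single_one, vecMulVec_apply, mul_comm] using this.symm

theorem Matrix.exists_vecMulVec_self_eq_of_transpose_eq {K n : Type*} [Field K] [IsAlgClosed K]
    {a b : n → K} (h : (vecMulVec a b)ᵀ = vecMulVec a b) :
    ∃ u, vecMulVec a b = vecMulVec u u := by
  rcases eq_or_ne a 0 with rfl | ha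
  · exact ⟨0, by simp⟩
  obtain ⟨i, hi : a i ≠ 0⟩ := Function.ne_iff.mp ha
  obtain ⟨s, hs⟩ := IsAlgClosed.exists_eq_mul_self (b i / a i)
  have hb : b = (s * s) • a := by
    funext j
    have := congrFun (congrFun h i) j
    simp only [transpose_apply, vecMulVec_apply] at this
    rw [← hs, Pi.smul_apply, smul_eq_mul]
    field_simp
    linear_combination -this
  refine ⟨s • a, ?_⟩
  ext j k
  simp only [hb, vecMulVec_apply, Pi.smul_apply, smul_eq_mul]
  ring

theorem J4_mul_J4 : J4 * J4 = -1 := by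
  ext i j
  fin_cases i <;> fin_cases j <;> simp [J4, mul_apply, Fin.sum_univ_four, one_apply]

theorem J4_transpose : J4ᵀ = -J4 := by
  ext i j
  fin_cases i <;> fin_cases j <;> simp [J4]

def IsSymplectic (P : Matrix (Fin 4) (Fin 4) ℂ) : Prop := Pᵀ * J4 * P = J4

theorem transpose_J4_mul_mul_J4 (P : Matrix (Fin 4) (Fin 4) ℂ) :
    (J4 * P * J4)ᵀ = J4 * Pᵀ * J4 := by
  rw [transpose_mul, transpose_mul, J4_transpose, neg_mul, mul_neg, mul_neg, neg_neg, mul_assoc]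

namespace IsSymplectic

variable {P : Matrix (Fin 4) (Fin 4) ℂ}

theorem inv_eq (hP : IsSymplectic P) : P⁻¹ = -(J4 * Pᵀ * J4) :=
  inv_eq_left_inv <| by
    rw [neg_mul, mul_assoc, mul_assoc, ← mul_assoc Pᵀ, hP, J4_mul_J4, neg_neg]

theorem inv_mul_J4 (hP : IsSymplectic P) : P⁻¹ * J4 = J4 * Pᵀ := by
  rw [hP.inv_eq, neg_mul, mul_assoc _ J4, J4_mul_J4, mul_neg_one, neg_neg]

theorem J4_mul_mul_J4 (hP : IsSymplectic P) : IsSymplectic (J4 * P * J4) := by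
  unfold IsSymplectic
  rw [transpose_J4_mul_mul_J4]
  calc J4 * Pᵀ * J4 * J4 * (J4 * P * J4) = J4 * Pᵀ * (J4 * J4) * J4 * P * J4 := by
        simp only [mul_assoc]
    _ = -(J4 * (Pᵀ * J4 * P) * J4) := by
        rw [J4_mul_J4]; simp only [mul_neg, neg_mul, mul_one, mul_assoc]
    _ = J4 := by rw [hP, J4_mul_J4, neg_one_mul, neg_neg]

theorem transpose_J4_mul_mul_J4_mul (hP : IsSymplectic P) : (J4 * P * J4)ᵀ * P = -1 := by
  rw [transpose_J4_mul_mul_J4, mul_assoc, mul_assoc, ← mul_assoc Pᵀ, hP, J4_mul_J4]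

theorem inv_mul_J4_mul_vecMulVec_mul (hP : IsSymplectic P) (v : Fin 4 → ℂ) :
    P⁻¹ * (J4 * vecMulVec v v) * P = J4 * vecMulVec (Pᵀ *ᵥ v) (Pᵀ *ᵥ v) := by
  rw [← mul_assoc, hP.inv_mul_J4, mul_assoc, mul_assoc, vecMulVec_mul, mul_vecMulVec,
    mulVec_transpose]

end IsSymplectic

theorem exists_isSymplectic_mulVec_single_two_eq {u : Fin 4 → ℂ} (hu : u ≠ 0) :
    ∃ C, IsSymplectic C ∧ C *ᵥ Pi.single 2 1 = u := by
  obtain ⟨k, hk : u k ≠ 0⟩ := Function.ne_iff.mp hu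
  -- the columns of `C` form a symplectic basis with third vector `u`, normalised by `u k`
  fin_cases k <;> dsimp at hk <;> [
    refine ⟨!![0, 0, u 0, 0;
             0, 1, u 1, 0;
             -1 / u 0, u 3 / u 0, u 2, -u 1 / u 0;
             0, 0, u 3, 1], ?_, ?_⟩;
    refine ⟨!![0, 1, u 0, 0;
             0, 0, u 1, 0;
             0, 0, u 2, 1;
             -1 / u 1, u 2 / u 1, u 3, -u 0 / u 1], ?_, ?_⟩;
    refine ⟨!![1 / u 2, -u 3 / u 2, u 0, u 1 / u 2;
             0, 1, u 1, 0;
             0, 0, u 2, 0;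
             0, 0, u 3, 1], ?_, ?_⟩;
    refine ⟨!![0, 1, u 0, 0;
             1 / u 3, -u 2 / u 3, u 1, u 0 / u 3;
             0, 0, u 2, 1;
             0, 0, u 3, 0], ?_, ?_⟩]
  all_goals first
    | ext i j
      fin_cases i <;> fin_cases j <;> simp [J4, mul_apply, Fin.sum_univ_four] <;> field_simp <;> ring
    | funext i
      fin_cases i <;> simp

theorem J4_mul_vecMulVec_single_two :
    J4 * vecMulVec (Pi.single 2 1) (Pi.single 2 1) =
      !![0, 0, 1, 0; 0, 0, 0, 0; 0, 0, 0, 0; 0, 0, 0, 0] := by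
  ext i j
  fin_cases i <;> fin_cases j <;> simp [J4, mul_apply, Fin.sum_univ_four, vecMulVec_apply]

theorem sp4_nilpotent_ker_dim_three_canonical_form_general
    (A : Matrix (Fin 4) (Fin 4) ℂ)
    (hsp : Aᵀ * J4 + J4 * A = 0)
    (hker : Module.finrank ℂ (LinearMap.ker A.mulVecLin) = 3) :
    ∃ B : Matrix (Fin 4) (Fin 4) ℂ,
      Bᵀ * J4 * B = J4 ∧
      B⁻¹ * A * B = !![0, 0, 1, 0;
                       0, 0, 0, 0;
                       0, 0, 0, 0;
                       0, 0, 0, 0] := by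
  have hrank : A.rank = 1 := by
    have := LinearMap.finrank_range_add_finrank_ker A.mulVecLin
    rw [hker, Module.finrank_fin_fun] at this
    exact Nat.add_right_cancel this
  have hsymm : (J4ᵀ * A)ᵀ = J4ᵀ * A := by
    rw [transpose_mul, transpose_transpose, eq_neg_of_add_eq_zero_left hsp, J4_transpose, neg_mul]
  obtain ⟨a, b, hab⟩ :=
    exists_eq_vecMulVec_of_rank_le_one _ ((rank_mul_le_right _ _).trans hrank.le)
  obtain ⟨u, hu⟩ := exists_vecMulVec_self_eq_of_transpose_eq (hab ▸ hsymm)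
  have hA : A = J4 * vecMulVec u u := by
    rw [← hu, ← hab, J4_transpose, ← mul_assoc, mul_neg, J4_mul_J4, neg_neg, one_mul]
  have hu0 : u ≠ 0 := by
    rintro rfl
    simp [hA] at hrank
  obtain ⟨C, hC, hCu⟩ := exists_isSymplectic_mulVec_single_two_eq hu0
  refine ⟨J4 * C * J4, hC.J4_mul_mul_J4, ?_⟩
  rw [hA, hC.J4_mul_mul_J4.inv_mul_J4_mul_vecMulVec_mul, ← hCu, mulVec_mulVec,
    hC.transpose_J4_mul_mul_J4_mul, neg_mulVec, one_mulVec, neg_vecMulVec, vecMulVec_neg, neg_neg,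
    J4_mul_vecMulVec_single_two]

/-- If `A ∈ sp(4,ℂ)` satisfies `A² = 0` and `ker A` has dimension `3`, then `A` is
symplectically conjugated to the elementary matrix `E₁₃`. -/
theorem sp4_nilpotent_ker_dim_three_canonical_form
    (A : Matrix (Fin 4) (Fin 4) ℂ)
    (hsp : Aᵀ * J4 + J4 * A = 0)
    (hA2 : A ^ 2 = 0)
    (hker : Module.finrank ℂ (LinearMap.ker A.mulVecLin) = 3) :
    ∃ B : Matrix (Fin 4) (Fin 4) ℂ,
      Bᵀ * J4 * B = J4 ∧
      B⁻¹ * A * B = !![0, 0, 1, 0;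
                       0, 0, 0, 0;
                       0, 0, 0, 0;
                       0, 0, 0, 0] :=
  sp4_nilpotent_ker_dim_three_canonical_form_general A hsp hker
end

section
/- If A ∈ sp(4,ℂ) is nilpotent with A³ ≠ 0 (equivalently, the kernel of A has dimension 1), then there exist B ∈ Sp(4,ℂ) and λ ∈ ℂ such that B⁻¹AB equals the matrix N_λ with rows (0,1,λ,0), (0,0,0,1), (0,0,0,0), (0,0,−1,0). -/
open Matrix

/-! Write `ω(x, y) = x ⬝ J y`. For `A ∈ sp(4, ℂ)` one has `ω(A x, y) = -ω(x, A y)`, so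
`(x, y) ↦ ω(x, A³ y)` is a symmetric form, nonzero because `A³ ≠ 0`; over `ℂ` some `u` then
has `ω(u, A³ u) = 1`. As `A⁴ = 0`, the Gram matrix of `u, A u, A² u, A³ u` is determined by
`ω(u, Aᵏ u) = (-1)ⁱ ω(Aⁱ u, Aᵏ⁻ⁱ u)`, which vanishes for even `k` and for `k ≥ 4`; only
`m = ω(u, A u)` survives. The basis `-A³ u, -A² u, u, m A³ u - A u` is then symplectic and
`A` acts on it by `N_{-m}`. -/

namespace Matrix

variable {l n R : Type*} [Fintype n] [CommRing R]

theorem transpose_mul_mul_apply (B : Matrix n l R) (M : Matrix n n R) (i j : l) :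
    (Bᵀ * M * B) i j = Bᵀ i ⬝ᵥ M *ᵥ Bᵀ j := by
  rw [mul_apply', dotProduct_mulVec]
  rfl

theorem dotProduct_mulVec_self_eq_zero [Invertible (2 : R)] {J : Matrix n n R} (hJ : Jᵀ = -J)
    (x : n → R) : x ⬝ᵥ J *ᵥ x = 0 := by
  have h : x ⬝ᵥ J *ᵥ x = -(x ⬝ᵥ J *ᵥ x) := by
    conv_lhs => rw [dotProduct_mulVec, ← dotProduct_comm, ← mulVec_transpose, hJ]
    rw [neg_mulVec, dotProduct_neg]
  have h2 : 2 * (x ⬝ᵥ J *ᵥ x) = 0 := by linear_combination h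
  rw [← invOf_mul_cancel_left (2 : R) (x ⬝ᵥ J *ᵥ x), h2, mul_zero]

variable [DecidableEq n]

theorem pow_card_eq_zero_of_isNilpotent [IsDomain R] {A : Matrix n n R} (hA : IsNilpotent A) :
    A ^ Fintype.card n = 0 := by
  have h := (isNilpotent_charpoly_sub_pow_of_isNilpotent hA).eq_zero
  rw [sub_eq_zero] at h
  simpa [h] using A.aeval_self_charpoly

theorem exists_dotProduct_mulVec_self_ne_zero [Invertible (2 : R)] {S : Matrix n n R}
    (hS : S.IsSymm) (h0 : S ≠ 0) : ∃ v, v ⬝ᵥ S *ᵥ v ≠ 0 := by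
  obtain ⟨v, hv⟩ := LinearMap.BilinForm.exists_bilinForm_self_ne_zero
    (toBilin'.map_ne_zero_iff.mpr h0)
    (LinearMap.BilinForm.isSymm_iff.mp (isSymm_toBilin'_iff_isSymm.mpr hS))
  exact ⟨v, by rwa [toBilin'_apply'] at hv⟩

theorem isUnit_det_of_transpose_mul_mul_self {B M : Matrix n n R} (hM : IsUnit M.det)
    (h : Bᵀ * M * B = M) : IsUnit B.det := by
  have hdet := congrArg det h
  rw [det_mul, det_mul, det_transpose, mul_right_comm] at hdet
  exact IsUnit.of_mul_eq_one _ (hM.mul_right_cancel (hdet.trans (one_mul _).symm))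

section LieAlgebra

variable {J A : Matrix n n R}

theorem transpose_pow_mul_eq_neg_one_pow_smul (hA : Aᵀ * J + J * A = 0) (k : ℕ) :
    (A ^ k)ᵀ * J = (-1 : R) ^ k • (J * A ^ k) := by
  have hAJ : Aᵀ * J = -(J * A) := eq_neg_of_add_eq_zero_left hA
  induction k with
  | zero => simp
  | succ k ih =>
    rw [pow_succ, transpose_mul, Matrix.mul_assoc, ih, mul_smul_comm, ← Matrix.mul_assoc, hAJ,
      Matrix.neg_mul, Matrix.mul_assoc, ← pow_succ', pow_succ (-1 : R), mul_neg_one, neg_smul,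
      smul_neg, ← pow_succ]

theorem pow_mulVec_dotProduct_mulVec (hA : Aᵀ * J + J * A = 0) (k : ℕ) (x y : n → R) :
    (A ^ k *ᵥ x) ⬝ᵥ J *ᵥ y = (-1) ^ k * (x ⬝ᵥ J *ᵥ (A ^ k *ᵥ y)) := by
  rw [dotProduct_mulVec, ← vecMul_transpose, vecMul_vecMul,
    transpose_pow_mul_eq_neg_one_pow_smul hA, ← dotProduct_mulVec, smul_mulVec, dotProduct_smul,
    mulVec_mulVec, smul_eq_mul]

theorem isSymm_mul_pow_of_odd (hA : Aᵀ * J + J * A = 0) (hJ : Jᵀ = -J) {k : ℕ} (hk : Odd k) :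
    (J * A ^ k).IsSymm := by
  rw [Matrix.IsSymm, transpose_mul, hJ, Matrix.mul_neg, transpose_pow_mul_eq_neg_one_pow_smul hA,
    hk.neg_one_pow, neg_one_smul, neg_neg]

theorem exists_dotProduct_mulVec_pow_mulVec_eq_one {K : Type*} [Field K] [IsAlgClosed K]
    [Invertible (2 : K)] {J A : Matrix n n K} (hA : Aᵀ * J + J * A = 0) (hJ : Jᵀ = -J)
    (hJdet : IsUnit J.det) {k : ℕ} (hk : Odd k) (hAk : A ^ k ≠ 0) :
    ∃ u, u ⬝ᵥ J *ᵥ (A ^ k *ᵥ u) = 1 := by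
  have hJAk : J * A ^ k ≠ 0 := by
    rwa [Ne, ((isUnit_iff_isUnit_det J).mpr hJdet).mul_right_eq_zero]
  obtain ⟨v, hv⟩ := exists_dotProduct_mulVec_self_ne_zero (isSymm_mul_pow_of_odd hA hJ hk) hJAk
  rw [← mulVec_mulVec] at hv
  obtain ⟨a, ha⟩ := IsAlgClosed.exists_pow_nat_eq (v ⬝ᵥ J *ᵥ (A ^ k *ᵥ v))⁻¹ two_pos
  refine ⟨a • v, ?_⟩
  rw [mulVec_smul, mulVec_smul, smul_dotProduct, dotProduct_smul, smul_eq_mul, smul_eq_mul,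
    ← mul_assoc, ← sq, ha, inv_mul_cancel₀ hv]

end LieAlgebra

def krylov (A : Matrix n n R) (u : n → R) (m : ℕ) : Matrix n (Fin m) R :=
  of fun i j => (A ^ (j : ℕ) *ᵥ u) i

def shift (R : Type*) [CommRing R] (m : ℕ) : Matrix (Fin m) (Fin m) R :=
  of fun i j => if (i : ℕ) = j + 1 then 1 else 0

theorem mul_krylov {A : Matrix n n R} {u : n → R} {m : ℕ} (hu : A ^ m *ᵥ u = 0) :
    A * krylov A u m = krylov A u m * shift R m := by
  ext i j
  have hAK : (A * krylov A u m) i j = (A ^ ((j : ℕ) + 1) *ᵥ u) i := by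
    rw [pow_succ', ← mulVec_mulVec]
    rfl
  rw [hAK, Matrix.mul_apply]
  by_cases hj : (j : ℕ) + 1 < m
  · rw [Finset.sum_eq_single ⟨j + 1, hj⟩]
    · simp [krylov, shift]
    · intro k _ hk
      rw [shift, of_apply, if_neg (fun h => hk (Fin.ext h)), mul_zero]
    · simp
  · have hjm : (j : ℕ) + 1 = m := by omega
    simp only [shift, of_apply, hjm, hu, Pi.zero_apply, mul_ite, mul_one, mul_zero]
    exact (Finset.sum_eq_zero fun k _ => if_neg k.is_lt.ne).symm

theorem krylov_transpose_mul_mul_krylov [Invertible (2 : R)] {J A : Matrix n n R} {u : n → R}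
    (hA : Aᵀ * J + J * A = 0) (hJ : Jᵀ = -J) (hA4 : A ^ 4 = 0)
    (hu : u ⬝ᵥ J *ᵥ (A ^ 3 *ᵥ u) = 1) :
    (krylov A u 4)ᵀ * J * krylov A u 4 =
      !![0, u ⬝ᵥ J *ᵥ (A *ᵥ u), 0, 1;
         -(u ⬝ᵥ J *ᵥ (A *ᵥ u)), 0, -1, 0;
         0, 1, 0, 0;
         -1, 0, 0, 0] := by
  obtain ⟨g, hg⟩ : ∃ g : ℕ → R, ∀ k, g k = u ⬝ᵥ J *ᵥ (A ^ k *ᵥ u) :=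
    ⟨_, fun _ => rfl⟩
  have hentry (i j : Fin 4) :
      ((krylov A u 4)ᵀ * J * krylov A u 4) i j = (-1) ^ (i : ℕ) * g (i + j) := by
    rw [transpose_mul_mul_apply, hg, pow_add, ← mulVec_mulVec,
      ← pow_mulVec_dotProduct_mulVec hA]
    rfl
  have g0 : g 0 = 0 := by
    rw [hg, pow_zero, one_mulVec, dotProduct_mulVec_self_eq_zero hJ]
  have g1 : g 1 = u ⬝ᵥ J *ᵥ (A *ᵥ u) := by rw [hg, pow_one]
  have g2 : g 2 = 0 := by
    have h := pow_mulVec_dotProduct_mulVec hA 1 u (A ^ 1 *ᵥ u)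
    rw [dotProduct_mulVec_self_eq_zero hJ, mulVec_mulVec u (A ^ 1), ← pow_add] at h
    rw [hg]
    linear_combination h
  have g3 : g 3 = 1 := (hg 3).trans hu
  have g_of_four_le (k : ℕ) (hk : 4 ≤ k) : g k = 0 := by
    obtain ⟨t, rfl⟩ := Nat.exists_eq_add_of_le hk
    rw [hg, pow_add, hA4, zero_mul, zero_mulVec, mulVec_zero, dotProduct_zero]
  ext i j
  rw [hentry]
  fin_cases i <;> fin_cases j <;> norm_num [g0, g1, g2, g3, g_of_four_le]

end Matrix

theorem det_J4 : J4.det = 1 := by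
  simp [J4, det_succ_row_zero, Fin.sum_univ_succ, Fin.succAbove]

/-- Coordinates, in the basis `u, A u, A² u, A³ u`, of the symplectic basis
`-A³ u, -A² u, u, m • A³ u - A u` in which `A` takes its normal form. -/
def sp4BasisChange (m : ℂ) : Matrix (Fin 4) (Fin 4) ℂ :=
  !![0, 0, 1, 0;
     0, 0, 0, -1;
     0, -1, 0, 0;
     -1, 0, 0, m]

theorem sp4BasisChange_transpose_mul_mul (m : ℂ) :
    (sp4BasisChange m)ᵀ * !![0, m, 0, 1; -m, 0, -1, 0; 0, 1, 0, 0; -1, 0, 0, 0] *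
      sp4BasisChange m = J4 := by
  ext i j
  fin_cases i <;> fin_cases j <;> simp [sp4BasisChange, J4, Matrix.mul_apply, Fin.sum_univ_four]

theorem shift_mul_sp4BasisChange (m : ℂ) :
    Matrix.shift ℂ 4 * sp4BasisChange m =
      sp4BasisChange m * !![0, 1, -m, 0; 0, 0, 0, 1; 0, 0, 0, 0; 0, 0, -1, 0] := by
  ext i j
  fin_cases i <;> fin_cases j <;>
    simp [sp4BasisChange, Matrix.shift, Matrix.mul_apply, Fin.sum_univ_four]

/-- If `A ∈ sp(4,ℂ)` is nilpotent with `A³ ≠ 0`, then `A` is symplectically conjugated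
to the matrix `N_λ` with rows `(0,1,λ,0)`, `(0,0,0,1)`, `(0,0,0,0)`, `(0,0,-1,0)`
for some `λ ∈ ℂ`. -/
theorem sp4_nilpotent_ker_dim_one_canonical_form
    (A : Matrix (Fin 4) (Fin 4) ℂ)
    (hsp : Aᵀ * J4 + J4 * A = 0)
    (hnil : IsNilpotent A)
    (hA3 : A ^ 3 ≠ 0) :
    ∃ (B : Matrix (Fin 4) (Fin 4) ℂ) (l : ℂ),
      Bᵀ * J4 * B = J4 ∧
      B⁻¹ * A * B = !![0, 1, l, 0;
                       0, 0, 0, 1;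
                       0, 0, 0, 0;
                       0, 0, -1, 0] := by
  have hJ4 : IsUnit J4.det := det_J4 ▸ isUnit_one
  obtain ⟨u, hu⟩ :=
    exists_dotProduct_mulVec_pow_mulVec_eq_one hsp J4_transpose hJ4 (by decide) hA3
  have hA4 : A ^ 4 = 0 := by simpa using pow_card_eq_zero_of_isNilpotent hnil
  set m := u ⬝ᵥ J4 *ᵥ (A *ᵥ u)
  set B := krylov A u 4 * sp4BasisChange m
  have hB : Bᵀ * J4 * B = J4 := by
    calc Bᵀ * J4 * B
        = (sp4BasisChange m)ᵀ * ((krylov A u 4)ᵀ * J4 * krylov A u 4) * sp4BasisChange m := by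
          simp only [B, transpose_mul, Matrix.mul_assoc]
      _ = J4 := by
          rw [krylov_transpose_mul_mul_krylov hsp J4_transpose hA4 hu,
            sp4BasisChange_transpose_mul_mul]
  have hAB : A * B = B * !![0, 1, -m, 0; 0, 0, 0, 1; 0, 0, 0, 0; 0, 0, -1, 0] := by
    rw [← Matrix.mul_assoc, mul_krylov (by rw [hA4, zero_mulVec]), Matrix.mul_assoc,
      shift_mul_sp4BasisChange, ← Matrix.mul_assoc]
  refine ⟨B, -m, hB, ?_⟩
  rw [Matrix.mul_assoc, hAB, ← Matrix.mul_assoc,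
    nonsing_inv_mul _ (isUnit_det_of_transpose_mul_mul_self hJ4 hB), Matrix.one_mul]
end

section
/- For λ, μ ∈ ℂ let M(λ,μ) be the 4×4 complex matrix with rows (1, λ, μ − λ³/6, λ²/2), (0, 1, −λ²/2, λ), (0, 0, 1, 0), (0, 0, −λ, 1). Then each M(λ,μ) belongs to Sp(4,ℂ), and M(λ,μ)·M(λ',μ') = M(λ+λ', μ+μ') for all λ, λ', μ, μ' ∈ ℂ. In particular {M(λ,μ) : λ, μ ∈ ℂ} is an abelian subgroup of Sp(4,ℂ). -/
open Matrix

/-- The matrix `M(λ,μ)` with rows `(1, λ, μ - λ³/6, λ²/2)`, `(0, 1, -λ²/2, λ)`,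
`(0, 0, 1, 0)`, `(0, 0, -λ, 1)`. -/
noncomputable def Mmat (l m : ℂ) : Matrix (Fin 4) (Fin 4) ℂ :=
  !![1, l, m - l ^ 3 / 6, l ^ 2 / 2;
     0, 1, -l ^ 2 / 2, l;
     0, 0, 1, 0;
     0, 0, -l, 1]

set_option maxHeartbeats 1000000 in
/-- Each `M(λ,μ)` is symplectic and `M(λ,μ)·M(λ',μ') = M(λ+λ', μ+μ')`; in particular
the family `{M(λ,μ)}` is an abelian subgroup of `Sp(4,ℂ)`. -/
theorem Mmat_abelian_subgroup_of_Sp4 :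
    (∀ l m : ℂ, (Mmat l m)ᵀ * J4 * Mmat l m = J4) ∧
    (∀ l m l' m' : ℂ, Mmat l m * Mmat l' m' = Mmat (l + l') (m + m')) ∧
    (∀ l m l' m' : ℂ, Mmat l m * Mmat l' m' = Mmat l' m' * Mmat l m) := by
  have key : ∀ l m l' m' : ℂ, Mmat l m * Mmat l' m' = Mmat (l + l') (m + m') := by
    intro l m l' m'
    simp only [Mmat]
    ext i j
    fin_cases i <;> fin_cases j <;>
      simp [Matrix.mul_apply, Fin.sum_univ_four, Matrix.vecHead, Matrix.vecTail] <;> ring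
  refine ⟨?_, key, fun l m l' m' => by rw [key, key, add_comm l, add_comm m]⟩
  intro l m
  simp only [Mmat, J4]
  ext i j
  fin_cases i <;> fin_cases j <;>
    simp [Matrix.mul_apply, Fin.sum_univ_four, Matrix.vecHead, Matrix.vecTail] <;> ring
end

section
/- Let H : ℂ × ℂ × ℂ → ℂ be a differentiable function of (x, y, t) and let F : ℂ × ℂ × ℂ × ℂ → ℂ be a differentiable function of (x, y, t, h) such that F Poisson-commutes with the extended Hamiltonian Ĥ = H + h, i.e. ∂F/∂x·∂H/∂y − ∂F/∂y·∂H/∂x + ∂F/∂t − ∂F/∂h·∂H/∂t = 0 identically on ℂ⁴. Fix λ ∈ ℂ and define G(x,y,t) := F(x, y, t, λ − H(x,y,t)). Then ∂G/∂x·∂H/∂y − ∂G/∂y·∂H/∂x + ∂G/∂t = 0 identically, i.e. G is a first integral of the non-autonomous Hamiltonian vector field of H. -/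
/-- `∂F/∂x` for a function of `(x,y,t) ∈ ℂ³`. -/
noncomputable def d3x (F : ℂ × ℂ × ℂ → ℂ) (p : ℂ × ℂ × ℂ) : ℂ := fderiv ℂ F p (1, 0, 0)

/-- `∂F/∂y` for a function of `(x,y,t) ∈ ℂ³`. -/
noncomputable def d3y (F : ℂ × ℂ × ℂ → ℂ) (p : ℂ × ℂ × ℂ) : ℂ := fderiv ℂ F p (0, 1, 0)

/-- `∂F/∂t` for a function of `(x,y,t) ∈ ℂ³`. -/
noncomputable def d3t (F : ℂ × ℂ × ℂ → ℂ) (p : ℂ × ℂ × ℂ) : ℂ := fderiv ℂ F p (0, 0, 1)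

/-- `∂F/∂x` for a function of `(x,y,t,h) ∈ ℂ⁴`. -/
noncomputable def d4x (F : ℂ × ℂ × ℂ × ℂ → ℂ) (q : ℂ × ℂ × ℂ × ℂ) : ℂ :=
  fderiv ℂ F q (1, 0, 0, 0)

/-- `∂F/∂y` for a function of `(x,y,t,h) ∈ ℂ⁴`. -/
noncomputable def d4y (F : ℂ × ℂ × ℂ × ℂ → ℂ) (q : ℂ × ℂ × ℂ × ℂ) : ℂ :=
  fderiv ℂ F q (0, 1, 0, 0)

/-- `∂F/∂t` for a function of `(x,y,t,h) ∈ ℂ⁴`. -/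
noncomputable def d4t (F : ℂ × ℂ × ℂ × ℂ → ℂ) (q : ℂ × ℂ × ℂ × ℂ) : ℂ :=
  fderiv ℂ F q (0, 0, 1, 0)

/-- `∂F/∂h` for a function of `(x,y,t,h) ∈ ℂ⁴`. -/
noncomputable def d4h (F : ℂ × ℂ × ℂ × ℂ → ℂ) (q : ℂ × ℂ × ℂ × ℂ) : ℂ :=
  fderiv ℂ F q (0, 0, 0, 1)

/-!
The restriction `G = F ∘ (p ↦ (p, λ - H p))` has, by the chain rule, partials
`G_v = F_v - H_v F_h`. In `G_x H_y - G_y H_x + G_t` the terms `H_x H_y F_h` cancel, and what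
remains is the extended bracket `F_x H_y - F_y H_x + F_t - F_h H_t = {F, Ĥ}^` on the level set.
-/

theorem map_prod_four_eq_add_smul {R M L : Type*} [Semiring R] [AddCommMonoid M] [Module R M]
    [FunLike L (R × R × R × R) M] [LinearMapClass L R (R × R × R × R) M]
    (f : L) (a b c h : R) :
    f (a, b, c, h) = f (a, b, c, 0) + h • f (0, 0, 0, 1) := by
  rw [← map_smul, ← map_add]
  simp

/-- `p ↦ (p, λ - H p)` parametrises the level set `Ĥ = λ`. -/
theorem fderiv_comp_graph_apply {H : ℂ × ℂ × ℂ → ℂ} {F : ℂ × ℂ × ℂ × ℂ → ℂ}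
    {lam : ℂ} {p : ℂ × ℂ × ℂ} (hH : DifferentiableAt ℂ H p)
    (hF : DifferentiableAt ℂ F (p.1, p.2.1, p.2.2, lam - H p)) (v : ℂ × ℂ × ℂ) :
    fderiv ℂ (fun p' => F (p'.1, p'.2.1, p'.2.2, lam - H p')) p v
      = fderiv ℂ F (p.1, p.2.1, p.2.2, lam - H p) (v.1, v.2.1, v.2.2, 0)
        - fderiv ℂ H p v * d4h F (p.1, p.2.1, p.2.2, lam - H p) := by
  have hgraph : HasFDerivAt (fun p' : ℂ × ℂ × ℂ => (p'.1, p'.2.1, p'.2.2, lam - H p'))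
      ((ContinuousLinearMap.fst ℂ ℂ (ℂ × ℂ)).prod
        (((ContinuousLinearMap.fst ℂ ℂ ℂ).comp (ContinuousLinearMap.snd ℂ ℂ (ℂ × ℂ))).prod
          (((ContinuousLinearMap.snd ℂ ℂ ℂ).comp (ContinuousLinearMap.snd ℂ ℂ (ℂ × ℂ))).prod
            (-fderiv ℂ H p)))) p :=
    hasFDerivAt_fst.prodMk ((hasFDerivAt_fst.comp p hasFDerivAt_snd).prodMk
      ((hasFDerivAt_snd.comp p hasFDerivAt_snd).prodMk (hH.hasFDerivAt.const_sub lam)))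
  have hG : HasFDerivAt (fun p' => F (p'.1, p'.2.1, p'.2.2, lam - H p')) _ p :=
    hF.hasFDerivAt.comp p hgraph
  rw [hG.fderiv, d4h]
  simp [map_prod_four_eq_add_smul (fderiv ℂ F _) _ _ _ (-(fderiv ℂ H p v)), sub_eq_add_neg]

/-- For `1+½` degrees of freedom: if `F(x,y,t,h)` Poisson-commutes with the extended
Hamiltonian `Ĥ = H + h`, then for any `λ ∈ ℂ` the restriction
`G(x,y,t) = F(x,y,t, λ − H(x,y,t))` is a first integral of the non-autonomous
Hamiltonian vector field of `H`, i.e. `Gₓ H_y − G_y Hₓ + G_t = 0`. -/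
theorem restriction_is_first_integral_one_and_half_dof
    (H : ℂ × ℂ × ℂ → ℂ) (F : ℂ × ℂ × ℂ × ℂ → ℂ)
    (hH : Differentiable ℂ H) (hF : Differentiable ℂ F)
    (hcomm : ∀ q : ℂ × ℂ × ℂ × ℂ,
      d4x F q * d3y H (q.1, q.2.1, q.2.2.1) - d4y F q * d3x H (q.1, q.2.1, q.2.2.1)
        + d4t F q - d4h F q * d3t H (q.1, q.2.1, q.2.2.1) = 0)
    (lam : ℂ) :
    ∀ p : ℂ × ℂ × ℂ,
      d3x (fun p' => F (p'.1, p'.2.1, p'.2.2, lam - H p')) p * d3y H p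
        - d3y (fun p' => F (p'.1, p'.2.1, p'.2.2, lam - H p')) p * d3x H p
        + d3t (fun p' => F (p'.1, p'.2.1, p'.2.2, lam - H p')) p = 0 := by
  intro p
  have hchain := fderiv_comp_graph_apply (lam := lam) (hH p) (hF _)
  have hbracket := hcomm (p.1, p.2.1, p.2.2, lam - H p)
  simp only [d3x, d3y, d3t, hchain] at hbracket ⊢
  rw [d4x, d4y, d4t] at hbracket
  linear_combination hbracket
end

section
/- Let f, g : ℂ → ℂ be arbitrary functions and consider the non-autonomous quadratic Hamiltonian H(t, ξ₁, ξ₂, η₁, η₂) = f(t)·(ξ₂η₁ + g(t)·η₁² + η₂²/2). Then F₁ := 2ξ₂η₁ + η₂² and F₂ := η₁² satisfy: (a) for every t, {{F₁, H(t,·)}} = 0 and {{F₂, H(t,·)}} = 0 (so F₁, F₂ are first integrals of the Hamiltonian vector field of H); (b) {{F₁, F₂}} = 0; and (c) the gradients of F₁ and F₂ are linearly independent at every point with η₁ ≠ 0, hence on a dense open subset of ℂ⁴. -/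
/-- Points `(ξ₁, ξ₂, η₁, η₂)` of `ℂ⁴`: coordinate `0` is `ξ₁`, `1` is `ξ₂`,
`2` is `η₁`, `3` is `η₂`. -/
abbrev V4 := Fin 4 → ℂ

/-- The partial derivative of `F : ℂ⁴ → ℂ` in the `i`-th coordinate direction. -/
noncomputable def pd (F : V4 → ℂ) (i : Fin 4) (p : V4) : ℂ :=
  fderiv ℂ F p (Pi.single i 1)

/-- The Poisson bracket
`{{F,G}} = Σᵢ₌₁² (∂F/∂ξᵢ·∂G/∂ηᵢ − ∂F/∂ηᵢ·∂G/∂ξᵢ)` of functions on `ℂ⁴`. -/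
noncomputable def pb (F G : V4 → ℂ) (p : V4) : ℂ :=
  pd F 0 p * pd G 2 p - pd F 2 p * pd G 0 p
    + pd F 1 p * pd G 3 p - pd F 3 p * pd G 1 p

/-- The gradient of `F : ℂ⁴ → ℂ`. -/
noncomputable def grad (F : V4 → ℂ) (p : V4) : V4 := fun i => pd F i p

/-!
None of `F₁`, `F₂`, `H` depends on `ξ₁`, so only the `(ξ₂, η₂)`-part of each bracket can survive.
There `F₂ = η₁²` has no component, while those of `∇F₁`, namely `2 (η₁, η₂)`, are parallel to
those of `∇H`, namely `f(t) (η₁, η₂)`.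
Where `η₁ ≠ 0`, the `ξ₂`-component `2η₁` of `∇F₁` is nonzero while that of `∇F₂ = (0, 0, 2η₁, 0)`
vanishes and `∇F₂ ≠ 0`, so the gradients are independent; `{η₁ ≠ 0}` is open and dense.
-/

open scoped Topology

theorem fderiv_apply_self {𝕜 ι : Type*} [NontriviallyNormedField 𝕜] [Fintype ι] (i : ι)
    (p : ι → 𝕜) : fderiv 𝕜 (fun q : ι → 𝕜 => q i) p = ContinuousLinearMap.proj i :=
  (hasFDerivAt_apply i p).fderiv

theorem pb_eq_grad (F G : V4 → ℂ) (p : V4) :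
    pb F G p = grad F p 0 * grad G p 2 - grad F p 2 * grad G p 0
      + grad F p 1 * grad G p 3 - grad F p 3 * grad G p 1 :=
  rfl

def F₁ : V4 → ℂ := fun p => 2 * (p 1 * p 2) + p 3 ^ 2

def F₂ : V4 → ℂ := fun p => p 2 ^ 2

noncomputable def ham (c d : ℂ) : V4 → ℂ :=
  fun p => c * (p 1 * p 2 + d * p 2 ^ 2 + p 3 ^ 2 / 2)

theorem grad_F₁ (p : V4) : grad F₁ p = ![0, 2 * p 2, 2 * p 1, 2 * p 3] := by
  ext i
  unfold F₁
  simp (disch := fun_prop) only [grad, pd, fderiv_fun_add, fderiv_const_mul, fderiv_fun_mul,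
    fderiv_fun_pow, fderiv_apply_self]
  fin_cases i <;> simp

theorem grad_F₂ (p : V4) : grad F₂ p = ![0, 0, 2 * p 2, 0] := by
  ext i
  unfold F₂
  simp (disch := fun_prop) only [grad, pd, fderiv_fun_pow, fderiv_apply_self]
  fin_cases i <;> simp

theorem grad_ham (c d : ℂ) (p : V4) :
    grad (ham c d) p = ![0, c * p 2, c * (p 1 + 2 * d * p 2), c * p 3] := by
  ext i
  unfold ham
  simp (disch := fun_prop) only [grad, pd, div_eq_mul_inv, fderiv_mul_const, fderiv_fun_add,
    fderiv_const_mul, fderiv_fun_mul, fderiv_fun_pow, fderiv_apply_self]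
  fin_cases i <;> simp
  ring

theorem pb_F₁_ham (c d : ℂ) (p : V4) : pb F₁ (ham c d) p = 0 := by
  simp only [pb_eq_grad, grad_F₁, grad_ham, Matrix.cons_val]
  ring

theorem pb_F₂_ham (c d : ℂ) (p : V4) : pb F₂ (ham c d) p = 0 := by
  simp only [pb_eq_grad, grad_F₂, grad_ham, Matrix.cons_val]
  ring

theorem pb_F₁_F₂ (p : V4) : pb F₁ F₂ p = 0 := by
  simp only [pb_eq_grad, grad_F₁, grad_F₂, Matrix.cons_val]
  ring

theorem linearIndependent_grad_F₁_F₂ {p : V4} (hp : p 2 ≠ 0) :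
    LinearIndependent ℂ ![grad F₁ p, grad F₂ p] := by
  rw [LinearIndependent.pair_iff]
  intro s t hst
  have h1 := congrFun hst 1
  have h2 := congrFun hst 2
  simp only [grad_F₁, grad_F₂, Pi.add_apply, Pi.smul_apply, Matrix.cons_val, smul_eq_mul,
    Pi.zero_apply] at h1 h2
  obtain rfl : s = 0 := by simpa [hp] using h1
  simpa [hp] using h2

theorem isOpen_setOf_apply_ne {ι X : Type*} [TopologicalSpace X] [T1Space X] (i : ι) (x : X) :
    IsOpen {p : ι → X | p i ≠ x} :=
  (continuous_apply i).isOpen_preimage _ isOpen_compl_singleton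

theorem dense_setOf_apply_ne {ι X : Type*} [TopologicalSpace X] (i : ι) (x : X)
    [(𝓝[≠] x).NeBot] : Dense {p : ι → X | p i ≠ x} :=
  (dense_compl_singleton x).preimage (isOpenMap_eval i)

/-- For `H = f(t)·(ξ₂η₁ + g(t)·η₁² + η₂²/2)`, the functions `F₁ = 2ξ₂η₁ + η₂²` and
`F₂ = η₁²` are first integrals in involution, with gradients linearly independent
wherever `η₁ ≠ 0`, hence on a dense open subset of `ℂ⁴`. -/
theorem integrability_case_xi2eta1 (f g : ℂ → ℂ) :
    (∀ t : ℂ, ∀ p : V4,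
        pb (fun p' => 2 * (p' 1 * p' 2) + p' 3 ^ 2)
           (fun p' => f t * (p' 1 * p' 2 + g t * p' 2 ^ 2 + p' 3 ^ 2 / 2)) p = 0 ∧
        pb (fun p' => p' 2 ^ 2)
           (fun p' => f t * (p' 1 * p' 2 + g t * p' 2 ^ 2 + p' 3 ^ 2 / 2)) p = 0) ∧
    (∀ p : V4, pb (fun p' => 2 * (p' 1 * p' 2) + p' 3 ^ 2) (fun p' => p' 2 ^ 2) p = 0) ∧
    (∀ p : V4, p 2 ≠ 0 →
        LinearIndependent ℂ
          ![grad (fun p' => 2 * (p' 1 * p' 2) + p' 3 ^ 2) p, grad (fun p' => p' 2 ^ 2) p]) ∧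
    (∃ s : Set V4, IsOpen s ∧ Dense s ∧ ∀ p ∈ s,
        LinearIndependent ℂ
          ![grad (fun p' => 2 * (p' 1 * p' 2) + p' 3 ^ 2) p, grad (fun p' => p' 2 ^ 2) p]) :=
  ⟨fun t p => ⟨pb_F₁_ham (f t) (g t) p, pb_F₂_ham (f t) (g t) p⟩, pb_F₁_F₂,
    fun _ => linearIndependent_grad_F₁_F₂,
    ⟨_, isOpen_setOf_apply_ne 2 0, dense_setOf_apply_ne 2 0,
      fun _ => linearIndependent_grad_F₁_F₂⟩⟩
end
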